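/- arXiv:1009.3743 — 3 statements merged into one kernel-verified Lean document; each statement's English description precedes it below -/
import Mathlib

section
/- For a fixed blocks' basis J = {I_1, ..., I_n}, the family of probability laws on ℝ^{|I|} of random vectors that are associated between the blocks I_1, ..., I_n is closed with respect to weak convergence of probability measures. -/
open MeasureTheory ProbabilityTheory
open scoped BoundedContinuousFunction

/-! Each defining inequality of `BlockAssociatedLaw` reads `0 ≤ cov μ F G` for bounded continuous
`F`, `G`. Such a covariance is built from integrals of bounded continuous functions, hence is
continuous in `μ` for weak convergence, so the family is an intersection of closed sets. -/

/-- Covariance of two real functionals under `μ`. -/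
noncomputable def cov {Ω : Type*} [MeasurableSpace Ω] (μ : Measure Ω) (f g : Ω → ℝ) : ℝ :=
  (∫ ω, f ω * g ω ∂μ) - (∫ ω, f ω ∂μ) * (∫ ω, g ω ∂μ)

/-- A family of real random variables is associated (Esary–Proschan–Walkup). -/
def IsAssociated {Ω : Type*} [MeasurableSpace Ω] (μ : Measure Ω) {I : Type*}
    (X : I → Ω → ℝ) : Prop :=
  ∀ f g : (I → ℝ) → ℝ, Monotone f → Monotone g →
    Integrable (fun ω => f (fun i => X i ω)) μ →
    Integrable (fun ω => g (fun i => X i ω)) μ →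
    Integrable (fun ω => f (fun i => X i ω) * g (fun i => X i ω)) μ →
    0 ≤ cov μ (fun ω => f (fun i => X i ω)) (fun ω => g (fun i => X i ω))

/-- Association between the blocks given by the fibers of `B`. -/
def IsBlockAssociated {Ω : Type*} [MeasurableSpace Ω] (μ : Measure Ω) {I : Type*} {n : ℕ}
    (B : I → Fin n) (X : I → Ω → ℝ) : Prop :=
  ∀ f : (k : Fin n) → ({i : I // B i = k} → ℝ) → ℝ, (∀ k, Monotone (f k)) →
    IsAssociated μ (fun k ω => f k (fun i => X i.1 ω))

/-- A law `μ` on `ℝ^I` is associated between the blocks given by `B`, tested on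
bounded continuous coordinatewise non-decreasing functions. -/
def BlockAssociatedLaw {I : Type*} [Fintype I] {n : ℕ} (B : I → Fin n)
    (μ : Measure (I → ℝ)) : Prop :=
  ∀ f : (k : Fin n) → ({i : I // B i = k} → ℝ) → ℝ,
    (∀ k, Monotone (f k)) → (∀ k, Continuous (f k)) → (∀ k, ∃ C, ∀ x, |f k x| ≤ C) →
  ∀ g h : (Fin n → ℝ) → ℝ, Monotone g → Monotone h → Continuous g → Continuous h →
    (∃ C, ∀ v, |g v| ≤ C) → (∃ C, ∀ v, |h v| ≤ C) →
    0 ≤ cov μ (fun x => g (fun k => f k (fun i => x i.1)))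
              (fun x => h (fun k => f k (fun i => x i.1)))

section

variable {X : Type*} [TopologicalSpace X] [MeasurableSpace X] [OpensMeasurableSpace X]

theorem continuous_cov_boundedContinuousFunction (F G : X →ᵇ ℝ) :
    Continuous fun μ : ProbabilityMeasure X => cov (μ : Measure X) F G := by
  have hFG := ProbabilityMeasure.continuous_integral_boundedContinuousFunction (F * G)
  simp only [BoundedContinuousFunction.coe_mul, Pi.mul_apply] at hFG
  exact hFG.sub ((ProbabilityMeasure.continuous_integral_boundedContinuousFunction F).mul
    (ProbabilityMeasure.continuous_integral_boundedContinuousFunction G))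

theorem isClosed_setOf_cov_nonneg {F G : X → ℝ} (hF : Continuous F) (hG : Continuous G)
    (hFb : ∃ C, ∀ x, |F x| ≤ C) (hGb : ∃ C, ∀ x, |G x| ≤ C) :
    IsClosed {μ : ProbabilityMeasure X | 0 ≤ cov (μ : Measure X) F G} := by
  obtain ⟨CF, hCF⟩ := hFb
  obtain ⟨CG, hCG⟩ := hGb
  exact isClosed_le continuous_const <| continuous_cov_boundedContinuousFunction
    (.ofNormedAddCommGroup F hF CF hCF) (.ofNormedAddCommGroup G hG CG hCG)

end

/-- the family of laws which are associated between the blocks of a fixed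
blocks' basis is closed under weak convergence of probability measures. -/
theorem blockAssociatedLaws_isClosed {I : Type*} [Fintype I] {n : ℕ} (B : I → Fin n) :
    IsClosed {μ : ProbabilityMeasure (I → ℝ) | BlockAssociatedLaw B (μ : Measure (I → ℝ))} := by
  simp only [BlockAssociatedLaw, Set.ofPred_forall]
  refine isClosed_iInter fun f => isClosed_iInter fun _ => isClosed_iInter fun hfc =>
    isClosed_iInter fun _ => isClosed_iInter fun g => isClosed_iInter fun h =>
    isClosed_iInter fun _ => isClosed_iInter fun _ => isClosed_iInter fun hgc =>
    isClosed_iInter fun hhc => isClosed_iInter fun hgb => isClosed_iInter fun hhb => ?_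
  have hblocks : Continuous fun x : I → ℝ => fun k => f k fun i => x i.1 :=
    continuous_pi fun k => (hfc k).comp (by fun_prop)
  exact isClosed_setOf_cov_nonneg (hgc.comp hblocks) (hhc.comp hblocks)
    (hgb.imp fun _ hC _ => hC _) (hhb.imp fun _ hC _ => hC _)
end

section
/- Let ν be a measure on ℝ^{|I|} and for k ≠ l define ν_{kl}(A) = ν(π_{kl}^{-1}(A) ∩ (ℝ² \ {0})) where π_{kl}(x) = (x_k, x_l). Then the following are equivalent: (i) for all k, l not in the same block, ν_{kl} is concentrated on (ℝ₋)² ∪ (ℝ₊)²; (ii) ν is concentrated on the set S = (ℝ₊)^{|I|} ∪ (ℝ₋)^{|I|} ∪ U, where U is the union over m = 1,...,n of the sets {x : x_i = 0 for all i ∉ I_m}. -/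
/-!
A point lies outside `S` exactly when two of its coordinates in different blocks have strictly
opposite signs: a point with a negative and a positive coordinate either has them in different
blocks already, or has a nonzero coordinate outside their common block, which has the wrong
sign with respect to one of them. So `Sᶜ` is the finite union of the sets on which `ν_{kl}`
must vanish.
-/

open MeasureTheory Set

section SignPattern

variable {I α β : Type*} [LinearOrder α] [Zero α]

def oppositeSigns (k l : I) : Set (I → α) :=
  {x | ¬(x k ≤ 0 ∧ x l ≤ 0) ∧ ¬(0 ≤ x k ∧ 0 ≤ x l)}

def signOrBlockSupported (B : I → β) : Set (I → α) :=
  {x | ∀ i, 0 ≤ x i} ∪ {x | ∀ i, x i ≤ 0} ∪ ⋃ m, {x | ∀ i, B i ≠ m → x i = 0}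

lemma mem_oppositeSigns_iff {x : I → α} {k l : I} :
    x ∈ oppositeSigns k l ↔ x k < 0 ∧ 0 < x l ∨ 0 < x k ∧ x l < 0 := by
  simp only [oppositeSigns, mem_ofPred_eq, not_and_or, not_le]
  grind

lemma oppositeSigns_subset_compl_signOrBlockSupported {B : I → β} {k l : I} (hkl : B k ≠ B l) :
    oppositeSigns k l ⊆ (signOrBlockSupported (α := α) B)ᶜ := by
  intro x hx
  simp only [signOrBlockSupported, mem_compl_iff, mem_union, mem_iUnion, mem_ofPred_eq, not_or,
    not_exists]
  rw [mem_oppositeSigns_iff] at hx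
  refine ⟨⟨fun h => ?_, fun h => ?_⟩, fun m hm => ?_⟩
  · have := h k; have := h l; grind
  · have := h k; have := h l; grind
  · by_cases hk : B k = m
    · have := hm l (hk ▸ hkl.symm); grind
    · have := hm k hk; grind

lemma compl_signOrBlockSupported_subset {B : I → β} :
    (signOrBlockSupported B)ᶜ ⊆ ⋃ k, ⋃ l, ⋃ (_ : B k ≠ B l), oppositeSigns (α := α) k l := by
  intro x hx
  simp only [signOrBlockSupported, mem_compl_iff, mem_union, mem_iUnion, mem_ofPred_eq, not_or,
    not_exists, not_forall, not_le] at hx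
  obtain ⟨⟨⟨i, hi⟩, ⟨j, hj⟩⟩, hblock⟩ := hx
  simp only [mem_iUnion, mem_oppositeSigns_iff]
  by_cases hij : B i = B j
  · obtain ⟨p, hp, hxp⟩ := hblock (B i)
    rcases lt_or_gt_of_ne hxp with hp' | hp'
    · exact ⟨j, p, hij ▸ Ne.symm hp, Or.inr ⟨hj, hp'⟩⟩
    · exact ⟨p, i, hp, Or.inr ⟨hp', hi⟩⟩
  · exact ⟨i, j, hij, Or.inl ⟨hi, hj⟩⟩

lemma compl_signOrBlockSupported (B : I → β) :
    (signOrBlockSupported B)ᶜ = ⋃ k, ⋃ l, ⋃ (_ : B k ≠ B l), oppositeSigns (α := α) k l :=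
  compl_signOrBlockSupported_subset.antisymm <| iUnion₂_subset fun _ _ =>
    iUnion_subset oppositeSigns_subset_compl_signOrBlockSupported

end SignPattern

/-- for a measure `ν` on `ℝ^I` and blocks given by `B`, the two-dimensional
characteristics `ν_{kl}` for `k, l` in different blocks are concentrated on
`(ℝ₋)² ∪ (ℝ₊)²` if and only if `ν` is concentrated on
`S = (ℝ₊)^I ∪ (ℝ₋)^I ∪ ⋃ m {x | xᵢ = 0 for i outside block m}`. -/
theorem levyMeasure_pairwise_concentration_iff
    {I : Type*} [Fintype I] {n : ℕ} (B : I → Fin n) (ν : Measure (I → ℝ)) :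
    (∀ k l : I, B k ≠ B l →
        ν {x : I → ℝ | ¬(x k ≤ 0 ∧ x l ≤ 0) ∧ ¬(0 ≤ x k ∧ 0 ≤ x l)} = 0) ↔
      ν ({x : I → ℝ | ∀ i, 0 ≤ x i} ∪ {x : I → ℝ | ∀ i, x i ≤ 0} ∪
          ⋃ m : Fin n, {x : I → ℝ | ∀ i, B i ≠ m → x i = 0})ᶜ = 0 := by
  change (∀ k l, B k ≠ B l → ν (oppositeSigns k l) = 0) ↔ ν (signOrBlockSupported B)ᶜ = 0
  simp only [compl_signOrBlockSupported, measure_iUnion_null_iff]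
end

section
/- The identity ℝ^{|I|} = (ℝ₊)^{|I|} ∪ (ℝ₋)^{|I|} ∪ U ∪ D holds, where U = ∪_{m=1}^n {x : x_i = 0 for all i ∉ I_m} and D = ∪_{(k,l): k,l in different blocks} {x : x_k > 0, x_l < 0}. -/
/-! If `x` has a negative coordinate `x k` and a positive one `x l`, and no positive coordinate
sits in a different block from a negative one, then `l` lies in the block of `k`, and any
nonzero coordinate outside that block would form such a pair with `k` or with `l`. -/

theorem eq_zero_of_block_ne {ι β α : Type*} [LinearOrder α] [Zero α] {B : ι → β} {x : ι → α}
    (hD : ∀ k l, B k ≠ B l → 0 < x k → 0 ≤ x l) {k l : ι} (hk : x k < 0) (hl : 0 < x l)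
    {i : ι} (hi : B i ≠ B k) : x i = 0 := by
  have hlk : B l = B k := by
    by_contra h
    exact (hD l k h hl).not_gt hk
  rcases lt_trichotomy (x i) 0 with hneg | hzero | hpos
  · exact ((hD l i (hlk ▸ hi.symm) hl).not_gt hneg).elim
  · exact hzero
  · exact ((hD i k hi hpos).not_gt hk).elim

/-- `ℝ^I = (ℝ₊)^I ∪ (ℝ₋)^I ∪ U ∪ D`, where `U` is the union of the sets of
vectors vanishing outside a single block and `D` is the union, over pairs of indices in
different blocks, of the sets of vectors with a strictly positive coordinate at one index
and a strictly negative coordinate at the other. -/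
theorem univ_eq_pos_union_neg_union_U_union_D
    {I : Type*} {n : ℕ} (B : I → Fin n) :
    (Set.univ : Set (I → ℝ)) =
      {x : I → ℝ | ∀ i, 0 ≤ x i} ∪ {x : I → ℝ | ∀ i, x i ≤ 0} ∪
        (⋃ m : Fin n, {x : I → ℝ | ∀ i, B i ≠ m → x i = 0}) ∪
        (⋃ k : I, ⋃ l : I, ⋃ _ : B k ≠ B l, {x : I → ℝ | 0 < x k ∧ x l < 0}) := by
  ext x
  simp only [Set.mem_univ, true_iff, Set.mem_union, Set.mem_iUnion, Set.mem_ofPred_eq, exists_prop]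
  by_cases hD : ∃ k l, B k ≠ B l ∧ 0 < x k ∧ x l < 0
  · exact Or.inr hD
  by_cases hpos : ∀ i, 0 ≤ x i
  · exact Or.inl (Or.inl (Or.inl hpos))
  by_cases hneg : ∀ i, x i ≤ 0
  · exact Or.inl (Or.inl (Or.inr hneg))
  push Not at hD hpos hneg
  obtain ⟨k, hk⟩ := hpos
  obtain ⟨l, hl⟩ := hneg
  exact Or.inl (Or.inr ⟨B k, fun i hi => eq_zero_of_block_ne hD hk hl hi⟩)
end
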